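/- arXiv:2210.15345 — 4 statements merged into one kernel-verified Lean document; each statement's English description precedes it below -/
import Mathlib

section
/- For all real y > 2 and x > y², one has e^{-2} · e^{-y} < (1 - y/x)^x ≤ e^{-y}. -/
/-! Both bounds come from `1 + t ≤ exp t`: with `t = -y/x` it gives `1 - y/x ≤ exp (-y/x)`, and
with `t = y/(x-y)` it gives `1 - y/x ≥ exp (-y/(x-y))`. Raising to the power `x`, the lower bound
becomes `exp (-y - y²/(x-y))`, and `y²/(x-y) < 2` as soon as `x > y + y²/2`, which `x > y² > 2y`
ensures. -/

open Real

namespace Real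

variable {x y : ℝ}

theorem one_sub_div_rpow_le_exp_neg (hx : 0 < x) (hyx : y ≤ x) :
    (1 - y / x) ^ x ≤ exp (-y) := by
  have hbase : 0 ≤ 1 - y / x := sub_nonneg.mpr ((div_le_one hx).mpr hyx)
  calc (1 - y / x) ^ x ≤ exp (-(y / x)) ^ x := by
        gcongr
        linarith [add_one_le_exp (-(y / x))]
    _ = exp (-y) := by rw [← exp_mul, neg_mul, div_mul_cancel₀ y hx.ne']

theorem exp_neg_div_sub_le_one_sub_div (hx : 0 < x) (hyx : y < x) :
    exp (-(y / (x - y))) ≤ 1 - y / x := by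
  have hxy : 0 < x - y := sub_pos.mpr hyx
  have hsum : 1 + y / (x - y) = x / (x - y) := by
    field_simp
    ring
  have hdiff : 1 - y / x = (x / (x - y))⁻¹ := by
    rw [inv_div]
    field_simp
  rw [hdiff, exp_neg, ← hsum]
  exact inv_anti₀ (hsum ▸ by positivity) (by linarith [add_one_le_exp (y / (x - y))])

theorem exp_neg_mul_div_sub_le_one_sub_div_rpow (hx : 0 < x) (hyx : y < x) :
    exp (-(y / (x - y)) * x) ≤ (1 - y / x) ^ x := by
  rw [exp_mul]
  gcongr
  exact exp_neg_div_sub_le_one_sub_div hx hyx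

end Real

theorem stmt2 (x y : ℝ) (hy : 2 < y) (hx : y ^ 2 < x) :
    Real.exp (-2) * Real.exp (-y) < (1 - y / x) ^ x ∧
    (1 - y / x) ^ x ≤ Real.exp (-y) := by
  have hyx : y < x := by nlinarith
  have hx0 : 0 < x := by linarith
  have hexcess : y / (x - y) * x < y + 2 := by
    rw [div_mul_eq_mul_div, div_lt_iff₀ (sub_pos.mpr hyx)]
    nlinarith
  refine ⟨?_, one_sub_div_rpow_le_exp_neg hx0 hyx.le⟩
  calc exp (-2) * exp (-y) = exp (-(y + 2)) := by rw [← exp_add]; ring_nf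
    _ < exp (-(y / (x - y)) * x) := by rw [exp_lt_exp]; linarith
    _ ≤ (1 - y / x) ^ x := exp_neg_mul_div_sub_le_one_sub_div_rpow hx0 hyx
end

section
/- Let d ≥ 2 and a, b > 0, and let Q be the d×d matrix with Q_{11} = a/d + (d−1)b, Q_{1j} = Q_{j1} = b/√d for j ≥ 2, and Q_{ij} = (b/d)δ_{ij} for i, j ≥ 2. Then Q is invertible, (Q^{-1})_{11} = d/a, and (Q^{-1})_{jj} = d²/a + d/b for every j ≥ 2. -/
/-!
`Q` is an arrowhead matrix `[[α, β 1ᵀ], [β 1, γ I]]` with `d - 1` arms. Eliminating the arms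
leaves the Schur complement `s = α - (d - 1) β² / γ`, and block inversion gives
`Q⁻¹ = [[s⁻¹, -β/(γ s) 1ᵀ], [-β/(γ s) 1, γ⁻¹ I + β²/(γ² s) 1 1ᵀ]]`.
For the given entries `β² / γ = b`, so `s = a / d`, and the two claimed diagonal entries are
`s⁻¹ = d / a` and `γ⁻¹ + β² / (γ² s) = d / b + d² / a`.
-/

open Matrix

namespace Matrix

variable {ι K : Type*} [Fintype ι] [DecidableEq ι] [Field K] (i₀ : ι)

def arrowhead (α β γ : K) : Matrix ι ι K :=
  of fun i j =>
    if i = i₀ then (if j = i₀ then α else β)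
    else if j = i₀ then β
    else if i = j then γ else 0

def arrowheadInv (β γ s : K) : Matrix ι ι K :=
  of fun i j =>
    if i = i₀ then (if j = i₀ then s⁻¹ else -β / (γ * s))
    else if j = i₀ then -β / (γ * s)
    else (if i = j then γ⁻¹ else 0) + β ^ 2 / (γ ^ 2 * s)

theorem arrowhead_mul_apply_self (α β γ : K) (M : Matrix ι ι K) (j : ι) :
    (arrowhead i₀ α β γ * M) i₀ j = α * M i₀ j + β * ∑ k ∈ Finset.univ.erase i₀, M k j := by
  rw [mul_apply, ← Finset.add_sum_erase _ _ (Finset.mem_univ i₀), Finset.mul_sum]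
  refine congrArg₂ _ (by simp [arrowhead]) (Finset.sum_congr rfl fun k hk => ?_)
  simp [arrowhead, Finset.ne_of_mem_erase hk]

theorem arrowhead_mul_apply_of_ne (α β γ : K) (M : Matrix ι ι K) {i : ι} (hi : i ≠ i₀) (j : ι) :
    (arrowhead i₀ α β γ * M) i j = β * M i₀ j + γ * M i j := by
  rw [mul_apply, ← Finset.add_sum_erase _ _ (Finset.mem_univ i₀)]
  refine congrArg₂ _ (by simp [arrowhead, hi]) ?_
  rw [Finset.sum_eq_single_of_mem i (Finset.mem_erase.2 ⟨hi, Finset.mem_univ i⟩)]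
  · simp [arrowhead, hi]
  · intro k hk hki
    simp [arrowhead, hi, Finset.ne_of_mem_erase hk, Ne.symm hki]

theorem sum_arrowheadInv_apply_self (β γ s : K) :
    ∑ k ∈ Finset.univ.erase i₀, arrowheadInv i₀ β γ s k i₀ =
      ((Fintype.card ι - 1 : ℕ) : K) * (-β / (γ * s)) := by
  rw [Finset.sum_congr rfl (g := fun _ => -β / (γ * s))
      fun k hk => by simp [arrowheadInv, Finset.ne_of_mem_erase hk],
    Finset.sum_const, Finset.card_erase_of_mem (Finset.mem_univ _), Finset.card_univ, nsmul_eq_mul]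

theorem sum_arrowheadInv_apply_of_ne (β γ s : K) {j : ι} (hj : j ≠ i₀) :
    ∑ k ∈ Finset.univ.erase i₀, arrowheadInv i₀ β γ s k j =
      γ⁻¹ + ((Fintype.card ι - 1 : ℕ) : K) * (β ^ 2 / (γ ^ 2 * s)) := by
  rw [Finset.sum_congr rfl (g := fun k => (if k = j then γ⁻¹ else 0) + β ^ 2 / (γ ^ 2 * s))
      fun k hk => by simp [arrowheadInv, Finset.ne_of_mem_erase hk, hj],
    Finset.sum_add_distrib, Finset.sum_ite_eq',
    if_pos (Finset.mem_erase.2 ⟨hj, Finset.mem_univ j⟩),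
    Finset.sum_const, Finset.card_erase_of_mem (Finset.mem_univ _), Finset.card_univ, nsmul_eq_mul]

theorem arrowhead_mul_arrowheadInv {α β γ s : K} (hγ : γ ≠ 0) (hs : s ≠ 0)
    (hα : α = s + ((Fintype.card ι - 1 : ℕ) : K) * β ^ 2 / γ) :
    arrowhead i₀ α β γ * arrowheadInv i₀ β γ s = 1 := by
  subst hα
  ext i j
  rcases eq_or_ne i i₀ with hi | hi <;> rcases eq_or_ne j i₀ with hj | hj
  · subst i j
    rw [arrowhead_mul_apply_self, sum_arrowheadInv_apply_self, one_apply_eq]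
    simp only [arrowheadInv, of_apply, if_true]
    field_simp; ring
  · subst i
    rw [arrowhead_mul_apply_self, sum_arrowheadInv_apply_of_ne _ _ _ _ hj, one_apply_ne' hj]
    simp only [arrowheadInv, of_apply, if_true, hj, if_false]
    field_simp; ring
  · subst j
    rw [arrowhead_mul_apply_of_ne _ _ _ _ _ hi, one_apply_ne hi]
    simp only [arrowheadInv, of_apply, if_true, hi, if_false]
    field_simp; ring
  · rw [arrowhead_mul_apply_of_ne _ _ _ _ _ hi, one_apply]
    simp only [arrowheadInv, of_apply, if_true, hi, hj, if_false]
    split_ifs <;> field_simp <;> ring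

theorem isUnit_det_arrowhead {α β γ s : K} (hγ : γ ≠ 0) (hs : s ≠ 0)
    (hα : α = s + ((Fintype.card ι - 1 : ℕ) : K) * β ^ 2 / γ) :
    IsUnit (arrowhead i₀ α β γ).det :=
  isUnit_det_of_right_inverse (arrowhead_mul_arrowheadInv i₀ hγ hs hα)

theorem inv_arrowhead {α β γ s : K} (hγ : γ ≠ 0) (hs : s ≠ 0)
    (hα : α = s + ((Fintype.card ι - 1 : ℕ) : K) * β ^ 2 / γ) :
    (arrowhead i₀ α β γ)⁻¹ = arrowheadInv i₀ β γ s :=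
  inv_eq_right_inv (arrowhead_mul_arrowheadInv i₀ hγ hs hα)

end Matrix

theorem stmt7_general (d : ℕ) [NeZero d] (a b : ℝ) (ha : 0 < a) (hb : 0 < b)
    (Q : Matrix (Fin d) (Fin d) ℝ)
    (hQ : Q = Matrix.of fun i j =>
      if i = 0 then
        (if j = 0 then a / d + ((d : ℝ) - 1) * b else b / Real.sqrt d)
      else if j = 0 then b / Real.sqrt d
      else if i = j then b / d else 0) :
    IsUnit Q.det ∧
    Q⁻¹ 0 0 = d / a ∧
    ∀ j : Fin d, j ≠ 0 → Q⁻¹ j j = (d : ℝ) ^ 2 / a + d / b := by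
  have hd : (d : ℝ) ≠ 0 := Nat.cast_ne_zero.2 (NeZero.ne d)
  have hγ : b / d ≠ 0 := div_ne_zero hb.ne' hd
  have hs : a / d ≠ 0 := div_ne_zero ha.ne' hd
  have hα : a / d + ((d : ℝ) - 1) * b =
      a / d + ((Fintype.card (Fin d) - 1 : ℕ) : ℝ) * (b / Real.sqrt d) ^ 2 / (b / d) := by
    rw [Fintype.card_fin, Nat.cast_pred (Nat.pos_of_neZero d), div_pow,
      Real.sq_sqrt (Nat.cast_nonneg d)]
    field_simp
  change Q = arrowhead 0 _ _ _ at hQ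
  refine ⟨hQ ▸ isUnit_det_arrowhead 0 hγ hs hα, ?_, fun j hj => ?_⟩ <;>
    rw [hQ, inv_arrowhead 0 hγ hs hα]
  · simp [arrowheadInv]
  · simp only [arrowheadInv, of_apply, hj, if_false, if_true, div_pow,
      Real.sq_sqrt (Nat.cast_nonneg d)]
    field_simp
    ring

theorem stmt7 (d : ℕ) [NeZero d] (hd : 2 ≤ d) (a b : ℝ) (ha : 0 < a) (hb : 0 < b)
    (Q : Matrix (Fin d) (Fin d) ℝ)
    (hQ : Q = Matrix.of fun i j =>
      if i = 0 then
        (if j = 0 then a / d + ((d : ℝ) - 1) * b else b / Real.sqrt d)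
      else if j = 0 then b / Real.sqrt d
      else if i = j then b / d else 0) :
    IsUnit Q.det ∧
    Q⁻¹ 0 0 = d / a ∧
    ∀ j : Fin d, j ≠ 0 → Q⁻¹ j j = (d : ℝ) ^ 2 / a + d / b :=
  stmt7_general d a b ha hb Q hQ
end

section
/- Let d ≥ 2, a > 0, b₂,…,b_d > 0, and let Q be the d×d matrix with Q_{11} = a/d + Σ_{i=2}^d b_i, Q_{1j} = Q_{j1} = b_j/√d for j ≥ 2, Q_{ij} = (b_i/d)δ_{ij} for i,j ≥ 2. Then (Q^{-1})_{11} = d/a and (Q^{-1})_{ii} = d²/a + d/b_i for i ≥ 2. Consequently, subject to the constraint Σ_{i=2}^d b_i = 1 − a with a fixed, max_{i≥2}(Q^{-1})_{ii} is minimized when b₂ = b₃ = ⋯ = b_d = (1−a)/(d−1). -/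
/-!
Writing `s = √d`, the inverse of `covMat d a b` is the matrix with `(0,0)` entry `d / a`,
off-diagonal first row and column `-d s / a`, and lower-right block `d² / a + diag (d / b i)`;
this is checked by multiplying out. Under `∑_{i ≠ 0} b i = 1 - a` some `b i` is at most the
average `(1 - a) / (d - 1)`, and `d² / a + d / b i` is antitone in `b i`.
-/

open Matrix

/-- The covariance matrix induced by weight `a` on the arm `(1/√d)e₁` and weights
`b i` on the arms `e₁ + (1/√d)eᵢ`, `i ≠ 1`. -/
noncomputable def covMat (d : ℕ) [NeZero d] (a : ℝ) (b : Fin d → ℝ) :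
    Matrix (Fin d) (Fin d) ℝ :=
  Matrix.of fun i j =>
    if i = 0 then
      (if j = 0 then a / d + ∑ k ∈ Finset.univ.erase (0 : Fin d), b k
       else b j / Real.sqrt d)
    else if j = 0 then b i / Real.sqrt d
    else if i = j then b i / d else 0

noncomputable def covMatInv (d : ℕ) [NeZero d] (a : ℝ) (b : Fin d → ℝ) :
    Matrix (Fin d) (Fin d) ℝ :=
  Matrix.of fun i j =>
    if i = 0 then (if j = 0 then d / a else -(d * √d) / a)
    else if j = 0 then -(d * √d) / a
    else d ^ 2 / a + if i = j then d / b i else 0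

theorem covMat_mul_covMatInv (d : ℕ) [NeZero d] {a : ℝ} (ha : a ≠ 0) {b : Fin d → ℝ}
    (hb : ∀ i, i ≠ 0 → b i ≠ 0) : covMat d a b * covMatInv d a b = 1 := by
  obtain ⟨n, rfl⟩ : ∃ n, d = n + 1 := Nat.exists_eq_succ_of_ne_zero (NeZero.ne d)
  have hs : √((n : ℝ) + 1) ^ 2 = n + 1 := Real.sq_sqrt (by positivity)
  have hs0 : √((n : ℝ) + 1) ≠ 0 := by positivity
  ext i k
  induction i using Fin.cases <;> induction k using Fin.cases <;>
    simp only [covMat, covMatInv, Matrix.mul_apply, of_apply, Matrix.one_apply, Fin.sum_univ_succ,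
      Finset.mem_univ, Finset.sum_erase_eq_sub, add_sub_cancel_left, Nat.cast_add, Nat.cast_one,
      ↓reduceIte, Fin.succ_ne_zero, (Fin.succ_ne_zero _).symm, Fin.succ_inj,
      mul_ite, ite_mul, zero_mul, mul_add, mul_zero, Finset.sum_add_distrib,
      Finset.sum_ite_eq, Finset.sum_ite_eq', ← Finset.sum_mul, ← Finset.sum_div]
  all_goals generalize √((n : ℝ) + 1) = s at *; rw [← hs]
  case zero.zero => field_simp; ring
  case zero.succ k =>
    have := hb _ k.succ_ne_zero
    field_simp; ring
  case succ.zero i => field_simp; ring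
  case succ.succ i k =>
    have := hb _ i.succ_ne_zero
    split_ifs with hik
    · subst hik; field_simp; ring
    · field_simp; ring

theorem inv_covMat (d : ℕ) [NeZero d] {a : ℝ} (ha : a ≠ 0) {b : Fin d → ℝ}
    (hb : ∀ i, i ≠ 0 → b i ≠ 0) : (covMat d a b)⁻¹ = covMatInv d a b :=
  inv_eq_right_inv (covMat_mul_covMatInv d ha hb)

theorem inv_covMat_apply_zero_zero (d : ℕ) [NeZero d] {a : ℝ} (ha : a ≠ 0) {b : Fin d → ℝ}
    (hb : ∀ i, i ≠ 0 → b i ≠ 0) : (covMat d a b)⁻¹ 0 0 = d / a := by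
  simp [inv_covMat d ha hb, covMatInv]

theorem inv_covMat_apply_self (d : ℕ) [NeZero d] {a : ℝ} (ha : a ≠ 0) {b : Fin d → ℝ}
    (hb : ∀ i, i ≠ 0 → b i ≠ 0) {i : Fin d} (hi : i ≠ 0) :
    (covMat d a b)⁻¹ i i = (d : ℝ) ^ 2 / a + d / b i := by
  simp [inv_covMat d ha hb, covMatInv, hi]

theorem exists_le_of_sum_eq_card_mul {ι : Type*} {s : Finset ι} (hs : s.Nonempty) {f : ι → ℝ}
    {c : ℝ} (hf : ∑ i ∈ s, f i = s.card * c) : ∃ i ∈ s, f i ≤ c :=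
  Finset.exists_le_of_sum_le hs (by simp [hf])

/-- Diagonal entries of the inverse, and the consequence: subject to
`∑_{i≠1} b i = 1 − a`, the maximum over `i ≠ 1` of `(Q⁻¹)_{ii}` is minimized by the
equal-weight choice `b i = (1−a)/(d−1)`. -/
theorem stmt12 (d : ℕ) [NeZero d] (hd : 2 ≤ d) (a : ℝ) (ha : 0 < a) (ha1 : a < 1) :
    (∀ b : Fin d → ℝ, (∀ i : Fin d, i ≠ 0 → 0 < b i) →
      ((covMat d a b)⁻¹ 0 0 = d / a ∧
        ∀ i : Fin d, i ≠ 0 → (covMat d a b)⁻¹ i i = (d : ℝ) ^ 2 / a + d / b i)) ∧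
    (∀ b : Fin d → ℝ, (∀ i : Fin d, i ≠ 0 → 0 < b i) →
      (∑ i ∈ Finset.univ.erase (0 : Fin d), b i = 1 - a) →
      (⨆ i : {i : Fin d // i ≠ 0},
          (covMat d a (fun _ => (1 - a) / ((d : ℝ) - 1)))⁻¹ i.1 i.1) ≤
        ⨆ i : {i : Fin d // i ≠ 0}, (covMat d a b)⁻¹ i.1 i.1) := by
  refine ⟨fun b hb => ⟨inv_covMat_apply_zero_zero d ha.ne' fun i hi => (hb i hi).ne',
    fun i => inv_covMat_apply_self d ha.ne' fun i hi => (hb i hi).ne'⟩, fun b hb hsum => ?_⟩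
  set c := (1 - a) / ((d : ℝ) - 1)
  have hd1 : (0 : ℝ) < d - 1 := by
    have : (2 : ℝ) ≤ d := mod_cast hd
    linarith
  have hc : 0 < c := div_pos (by linarith) hd1
  have hone : (⟨1, by omega⟩ : Fin d) ≠ 0 := by simp [Fin.ext_iff]
  obtain ⟨i₀, hi₀, hbi₀⟩ : ∃ i ∈ Finset.univ.erase (0 : Fin d), b i ≤ c := by
    refine exists_le_of_sum_eq_card_mul ⟨_, Finset.mem_erase.2 ⟨hone, Finset.mem_univ _⟩⟩ ?_
    rw [hsum, Finset.card_erase_of_mem (Finset.mem_univ _), Finset.card_univ, Fintype.card_fin,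
      Nat.cast_pred (NeZero.pos d), mul_div_cancel₀ _ hd1.ne']
  have hi₀0 : i₀ ≠ 0 := (Finset.mem_erase.1 hi₀).1
  have : Nonempty {i : Fin d // i ≠ 0} := ⟨⟨_, hone⟩⟩
  calc (⨆ i : {i : Fin d // i ≠ 0}, (covMat d a fun _ => c)⁻¹ i.1 i.1)
      = (d : ℝ) ^ 2 / a + d / c := by
        simp only [fun i : {i : Fin d // i ≠ 0} =>
          inv_covMat_apply_self d ha.ne' (fun _ _ => hc.ne') i.2, ciSup_const]
    _ ≤ (d : ℝ) ^ 2 / a + d / b i₀ := by gcongr; exact hb i₀ hi₀0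
    _ = (covMat d a b)⁻¹ i₀ i₀ :=
        (inv_covMat_apply_self d ha.ne' (fun i hi => (hb i hi).ne') hi₀0).symm
    _ ≤ ⨆ i : {i : Fin d // i ≠ 0}, (covMat d a b)⁻¹ i.1 i.1 :=
        le_ciSup (f := fun i : {i : Fin d // i ≠ 0} => (covMat d a b)⁻¹ i.1 i.1)
          (Set.finite_range _).bddAbove ⟨i₀, hi₀0⟩
end

section
/- Let X₁,…,X_n be random vectors in R^d, i.i.d., drawn from a distribution μ on a finite set A ⊂ R^d with covariance-of-second-moment matrix Q = E[XXᵀ] invertible. Fix θ*, θ₀ ∈ R^d, let η be conditionally mean-zero noise with conditional variance at most σ², independent across samples, and let y = ⟨X, θ*⟩ + η. Define θ̃ = θ₀ + Q^{-1}X(y − ⟨X, θ₀⟩). Then E[θ̃] = θ* and Cov(θ̃) ⪯ (R₀² + σ²)·Q^{-1}, where R₀ = max_{a∈A} |⟨a, θ* − θ₀⟩|. -/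
/-!
Write `Δ = θ* - θ₀` and `w = vᵀ Q⁻¹`. Then `vᵀ (θ̃ - θ*) = (w·X)(X·Δ) - v·Δ + (w·X) η`, and
`E[(w·X)(X·Δ)] = wᵀ Q Δ = v·Δ`, so every linear functional of the error is "a centred function of
`X` plus a function of `X` times `η`". Conditioning on `X` kills the mean of the noise term and
the cross term, and bounds the noise term by `σ² E[(w·X)²]`; the signal term is a variance, hence
at most `E[(w·X)²(X·Δ)²] ≤ R₀² E[(w·X)²]`. Finally `E[(w·X)²] = wᵀ Q w = vᵀ Q⁻¹ v`.
Since `X` takes finitely many values, every function of `X` is bounded and `σ(X)`-measurable,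
which settles all integrability and measurability side conditions.
-/

open Matrix MeasureTheory ProbabilityTheory

section FiniteRange

variable {Ω α : Type*} [MeasurableSpace α] [MeasurableSingletonClass α] {X : Ω → α} {A : Finset α}

theorem measurable_comp_of_forall_mem {β : Type*} {m : MeasurableSpace Ω} [MeasurableSpace β]
    (hX : Measurable X) (hXA : ∀ ω, X ω ∈ A) (φ : α → β) : Measurable fun ω => φ (X ω) :=
  (measurable_of_finite fun a : A => φ a).comp (hX.subtype_mk (h := hXA))

variable [MeasurableSpace Ω] {μ : Measure Ω}

theorem memLp_top_comp_of_forall_mem (hX : Measurable X) (hXA : ∀ ω, X ω ∈ A) (φ : α → ℝ) :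
    MemLp (fun ω => φ (X ω)) ⊤ μ :=
  memLp_top_of_bound (measurable_comp_of_forall_mem hX hXA φ).aestronglyMeasurable
    (∑ a ∈ A, |φ a|) (.of_forall fun ω => Finset.single_le_sum (f := fun a => |φ a|)
      (fun _ _ => abs_nonneg _) (hXA ω))

theorem memLp_comp_mul_of_forall_mem {p : ENNReal} {g : Ω → ℝ} (hX : Measurable X)
    (hXA : ∀ ω, X ω ∈ A) (φ : α → ℝ) (hg : MemLp g p μ) :
    MemLp (fun ω => φ (X ω) * g ω) p μ :=
  hg.mul' (memLp_top_comp_of_forall_mem hX hXA φ)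

theorem integrable_comp_of_forall_mem [IsFiniteMeasure μ] (hX : Measurable X)
    (hXA : ∀ ω, X ω ∈ A) (φ : α → ℝ) : Integrable (fun ω => φ (X ω)) μ :=
  (memLp_top_comp_of_forall_mem hX hXA φ).integrable le_top

theorem integrable_comp_mul_of_forall_mem {g : Ω → ℝ} (hX : Measurable X)
    (hXA : ∀ ω, X ω ∈ A) (φ : α → ℝ) (hg : Integrable g μ) :
    Integrable (fun ω => φ (X ω) * g ω) μ :=
  memLp_one_iff_integrable.1 <|
    memLp_comp_mul_of_forall_mem hX hXA φ (memLp_one_iff_integrable.2 hg)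

theorem integral_comp_mul_eq_integral_comp_mul_condExp [IsFiniteMeasure μ] {g : Ω → ℝ}
    (hX : Measurable X) (hXA : ∀ ω, X ω ∈ A) (φ : α → ℝ) (hg : Integrable g μ) :
    ∫ ω, φ (X ω) * g ω ∂μ = ∫ ω, φ (X ω) * μ[g | MeasurableSpace.comap X inferInstance] ω ∂μ := by
  have hφX : StronglyMeasurable[MeasurableSpace.comap X inferInstance] fun ω => φ (X ω) :=
    (measurable_comp_of_forall_mem (comap_measurable X) hXA φ).stronglyMeasurable
  rw [← integral_condExp hX.comap_le]
  exact integral_congr_ae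
    (condExp_mul_of_stronglyMeasurable_left hφX (integrable_comp_mul_of_forall_mem hX hXA φ hg) hg)

variable {η : Ω → ℝ}

theorem integral_comp_mul_eq_zero_of_condExp_eq_zero [IsFiniteMeasure μ]
    (hX : Measurable X) (hXA : ∀ ω, X ω ∈ A) (hη : Integrable η μ)
    (hη0 : μ[η | MeasurableSpace.comap X inferInstance] =ᵐ[μ] 0) (φ : α → ℝ) :
    ∫ ω, φ (X ω) * η ω ∂μ = 0 := by
  rw [integral_comp_mul_eq_integral_comp_mul_condExp hX hXA φ hη]
  exact integral_eq_zero_of_ae (hη0.mono fun ω hω => by simp [hω])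

theorem integral_comp_mul_le_of_condExp_le [IsFiniteMeasure μ] {g : Ω → ℝ} {c : ℝ}
    (hX : Measurable X) (hXA : ∀ ω, X ω ∈ A) (hg : Integrable g μ)
    (hgc : ∀ᵐ ω ∂μ, μ[g | MeasurableSpace.comap X inferInstance] ω ≤ c) (φ : α → ℝ) (hφ : 0 ≤ φ) :
    ∫ ω, φ (X ω) * g ω ∂μ ≤ c * ∫ ω, φ (X ω) ∂μ := by
  rw [integral_comp_mul_eq_integral_comp_mul_condExp hX hXA φ hg, ← integral_const_mul]
  refine integral_mono_ae
    (integrable_comp_mul_of_forall_mem hX hXA φ integrable_condExp)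
    ((integrable_comp_of_forall_mem hX hXA φ).const_mul c) ?_
  filter_upwards [hgc] with ω hω
  rw [mul_comm c]
  exact mul_le_mul_of_nonneg_left hω (hφ _)

theorem memLp_two_comp_sub_add_comp_mul [IsFiniteMeasure μ] (hX : Measurable X) (hXA : ∀ ω, X ω ∈ A)
    (hη : MemLp η 2 μ) (φ ψ : α → ℝ) (c : ℝ) :
    MemLp (fun ω => φ (X ω) - c + ψ (X ω) * η ω) 2 μ :=
  ((memLp_top_comp_of_forall_mem hX hXA fun x => φ x - c).mono_exponent le_top).add
    (memLp_comp_mul_of_forall_mem hX hXA ψ hη)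

theorem integral_comp_sub_integral_add_comp_mul_eq_zero [IsProbabilityMeasure μ]
    (hX : Measurable X) (hXA : ∀ ω, X ω ∈ A) (hη : Integrable η μ)
    (hη0 : μ[η | MeasurableSpace.comap X inferInstance] =ᵐ[μ] 0) (φ ψ : α → ℝ) :
    ∫ ω, (φ (X ω) - ∫ ω', φ (X ω') ∂μ + ψ (X ω) * η ω) ∂μ = 0 := by
  have hcentred : Integrable (fun ω => φ (X ω) - ∫ ω', φ (X ω') ∂μ) μ :=
    integrable_comp_of_forall_mem hX hXA fun x => φ x - ∫ ω', φ (X ω') ∂μ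
  rw [integral_add hcentred (integrable_comp_mul_of_forall_mem hX hXA ψ hη),
    integral_comp_mul_eq_zero_of_condExp_eq_zero hX hXA hη hη0,
    integral_sub (integrable_comp_of_forall_mem hX hXA φ) (integrable_const _)]
  simp

theorem integral_sq_comp_sub_integral_add_comp_mul_le [IsProbabilityMeasure μ] {σ : ℝ}
    (hX : Measurable X) (hXA : ∀ ω, X ω ∈ A) (hη : MemLp η 2 μ)
    (hη0 : μ[η | MeasurableSpace.comap X inferInstance] =ᵐ[μ] 0)
    (hησ : ∀ᵐ ω ∂μ, μ[fun ω' => η ω' ^ 2 | MeasurableSpace.comap X inferInstance] ω ≤ σ ^ 2)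
    (φ ψ : α → ℝ) :
    ∫ ω, (φ (X ω) - ∫ ω', φ (X ω') ∂μ + ψ (X ω) * η ω) ^ 2 ∂μ ≤
      ∫ ω, φ (X ω) ^ 2 ∂μ + σ ^ 2 * ∫ ω, ψ (X ω) ^ 2 ∂μ := by
  set m := ∫ ω, φ (X ω) ∂μ
  have hη1 : Integrable η μ := hη.integrable one_le_two
  have hexpand : ∀ ω, (φ (X ω) - m + ψ (X ω) * η ω) ^ 2 =
      ((φ (X ω) - m) ^ 2 + 2 * (φ (X ω) - m) * ψ (X ω) * η ω) + ψ (X ω) ^ 2 * η ω ^ 2 :=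
    fun ω => by ring
  have hsignal : ∫ ω, (φ (X ω) - m) ^ 2 ∂μ ≤ ∫ ω, φ (X ω) ^ 2 ∂μ := by
    have hφX := (measurable_comp_of_forall_mem hX hXA φ).aestronglyMeasurable (μ := μ)
    rw [← variance_eq_integral hφX.aemeasurable]
    exact variance_le_expectation_sq hφX
  have hnoise : ∫ ω, ψ (X ω) ^ 2 * η ω ^ 2 ∂μ ≤ σ ^ 2 * ∫ ω, ψ (X ω) ^ 2 ∂μ :=
    integral_comp_mul_le_of_condExp_le hX hXA hη.integrable_sq hησ (fun x => ψ x ^ 2)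
      fun x => sq_nonneg _
  have hsignal_int : Integrable (fun ω => (φ (X ω) - m) ^ 2) μ :=
    integrable_comp_of_forall_mem hX hXA fun x => (φ x - m) ^ 2
  have hcross_int : Integrable (fun ω => 2 * (φ (X ω) - m) * ψ (X ω) * η ω) μ :=
    integrable_comp_mul_of_forall_mem hX hXA (fun x => 2 * (φ x - m) * ψ x) hη1
  have hnoise_int : Integrable (fun ω => ψ (X ω) ^ 2 * η ω ^ 2) μ :=
    integrable_comp_mul_of_forall_mem hX hXA (fun x => ψ x ^ 2) hη.integrable_sq
  have hsum_int : Integrable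
      (fun ω => (φ (X ω) - m) ^ 2 + 2 * (φ (X ω) - m) * ψ (X ω) * η ω) μ :=
    hsignal_int.add hcross_int
  simp_rw [hexpand]
  -- the cross term is a function of `X` times `η`, so it integrates to zero
  rw [integral_add hsum_int hnoise_int, integral_add hsignal_int hcross_int,
    integral_comp_mul_eq_zero_of_condExp_eq_zero hX hXA hη1 hη0 (fun x => 2 * (φ x - m) * ψ x)]
  linarith

end FiniteRange

section SecondMoment

variable {Ω n : Type*} [MeasurableSpace Ω] {μ : Measure Ω}

noncomputable def secondMoment (μ : Measure Ω) (Z : Ω → n → ℝ) : Matrix n n ℝ :=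
  Matrix.of fun i j => ∫ ω, Z ω i * Z ω j ∂μ

theorem isHermitian_secondMoment (Z : Ω → n → ℝ) : (secondMoment μ Z).IsHermitian := by
  ext i j
  simp [secondMoment, mul_comm]

variable [Fintype n]

theorem dotProduct_secondMoment_mulVec {Z : Ω → n → ℝ} (hZ : ∀ i, MemLp (fun ω => Z ω i) 2 μ)
    (a b : n → ℝ) : a ⬝ᵥ secondMoment μ Z *ᵥ b = ∫ ω, (a ⬝ᵥ Z ω) * (Z ω ⬝ᵥ b) ∂μ := by
  have hint : ∀ i j, Integrable (fun ω => a i * Z ω i * (Z ω j * b j)) μ := fun i j =>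
    (((hZ i).const_mul (a i)).integrable_mul ((hZ j).mul_const (b j)) :)
  simp only [dotProduct, Finset.sum_mul_sum]
  rw [integral_finsetSum _ fun i _ => integrable_finsetSum _ fun j _ => hint i j]
  refine Finset.sum_congr rfl fun i _ => ?_
  rw [integral_finsetSum _ fun j _ => hint i j, mulVec, dotProduct, Finset.mul_sum]
  refine Finset.sum_congr rfl fun j _ => ?_
  simp only [secondMoment, of_apply]
  rw [← integral_mul_const, ← integral_const_mul]
  congr 1 with ω
  ring

theorem posSemidef_sub_secondMoment [DecidableEq n] {Z : Ω → n → ℝ} {M : Matrix n n ℝ}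
    (hM : M.IsHermitian) (hZ : ∀ v, MemLp (fun ω => v ⬝ᵥ Z ω) 2 μ)
    (hZM : ∀ v, ∫ ω, (v ⬝ᵥ Z ω) ^ 2 ∂μ ≤ v ⬝ᵥ M *ᵥ v) :
    (M - secondMoment μ Z).PosSemidef := by
  have hcoord : ∀ i, MemLp (fun ω => Z ω i) 2 μ := fun i => by
    simpa only [single_one_dotProduct] using hZ (Pi.single i 1)
  refine posSemidef_iff_dotProduct_mulVec.2 ⟨hM.sub (isHermitian_secondMoment Z), fun v => ?_⟩
  rw [star_trivial, sub_mulVec, dotProduct_sub, dotProduct_secondMoment_mulVec hcoord]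
  simp_rw [dotProduct_comm _ v, ← sq]
  exact sub_nonneg.2 (hZM v)

theorem integral_apply_eq_of_integral_dotProduct_sub_eq_zero [IsProbabilityMeasure μ]
    [DecidableEq n] {Z : Ω → n → ℝ} {c : n → ℝ}
    (hZ : ∀ v, Integrable (fun ω => v ⬝ᵥ (Z ω - c)) μ) (hZc : ∀ v, ∫ ω, v ⬝ᵥ (Z ω - c) ∂μ = 0)
    (i : n) : ∫ ω, Z ω i ∂μ = c i := by
  have hint : Integrable (fun ω => Z ω i - c i) μ := by
    simpa only [single_one_dotProduct, Pi.sub_apply] using hZ (Pi.single i 1)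
  have hzero : ∫ ω, (Z ω i - c i) ∂μ = 0 := by
    simpa only [single_one_dotProduct, Pi.sub_apply] using hZc (Pi.single i 1)
  have hZi : Integrable (fun ω => Z ω i) μ :=
    integrable_add_const_iff.1 (by simpa only [sub_eq_add_neg] using hint)
  rw [integral_sub hZi (integrable_const _), integral_const] at hzero
  simpa [sub_eq_zero] using hzero

end SecondMoment

theorem dotProduct_sub_eq_of_apply_eq_add_mulVec_mul {d : ℕ} (P : Matrix (Fin d) (Fin d) ℝ)
    {x θs θ0 θ : Fin d → ℝ} {e : ℝ} (hθ : ∀ i, θ i = θ0 i + (P *ᵥ x) i * (x ⬝ᵥ θs + e - x ⬝ᵥ θ0))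
    (v : Fin d → ℝ) :
    v ⬝ᵥ (θ - θs) =
      (v ᵥ* P ⬝ᵥ x) * (x ⬝ᵥ (θs - θ0)) - v ⬝ᵥ (θs - θ0) + (v ᵥ* P ⬝ᵥ x) * e := by
  have hθ' : θ - θs = (x ⬝ᵥ (θs - θ0) + e) • (P *ᵥ x) - (θs - θ0) := by
    ext i
    simp only [hθ i, dotProduct_sub, Pi.sub_apply, Pi.smul_apply, smul_eq_mul]
    ring
  rw [hθ', dotProduct_sub, dotProduct_smul, dotProduct_mulVec, smul_eq_mul]
  ring

section LinearModel

variable {Ω : Type*} [MeasurableSpace Ω] {μ : Measure Ω} {d : ℕ}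
  {X : Ω → Fin d → ℝ} {A : Finset (Fin d → ℝ)}

theorem integral_dotProduct_mul_dotProduct [IsFiniteMeasure μ]
    (hX : Measurable X) (hXA : ∀ ω, X ω ∈ A)
    (a b : Fin d → ℝ) :
    ∫ ω, (a ⬝ᵥ X ω) * (X ω ⬝ᵥ b) ∂μ = a ⬝ᵥ secondMoment μ X *ᵥ b :=
  (dotProduct_secondMoment_mulVec
    (fun i => (memLp_top_comp_of_forall_mem hX hXA (· i)).mono_exponent le_top) a b).symm

theorem integral_vecMul_inv_secondMoment_mul [IsFiniteMeasure μ]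
    (hX : Measurable X) (hXA : ∀ ω, X ω ∈ A)
    (hQ : IsUnit (secondMoment μ X).det) (v b : Fin d → ℝ) :
    ∫ ω, (v ᵥ* (secondMoment μ X)⁻¹ ⬝ᵥ X ω) * (X ω ⬝ᵥ b) ∂μ = v ⬝ᵥ b := by
  rw [integral_dotProduct_mul_dotProduct hX hXA, dotProduct_mulVec, vecMul_vecMul,
    nonsing_inv_mul _ hQ, vecMul_one]

theorem integral_sq_vecMul_inv_secondMoment [IsFiniteMeasure μ]
    (hX : Measurable X) (hXA : ∀ ω, X ω ∈ A)
    (hQ : IsUnit (secondMoment μ X).det) (v : Fin d → ℝ) :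
    ∫ ω, (v ᵥ* (secondMoment μ X)⁻¹ ⬝ᵥ X ω) ^ 2 ∂μ = v ⬝ᵥ (secondMoment μ X)⁻¹ *ᵥ v := by
  set w := v ᵥ* (secondMoment μ X)⁻¹
  calc ∫ ω, (w ⬝ᵥ X ω) ^ 2 ∂μ = ∫ ω, (w ⬝ᵥ X ω) * (X ω ⬝ᵥ w) ∂μ := by
        simp_rw [sq, dotProduct_comm (X _)]
    _ = v ⬝ᵥ w := integral_vecMul_inv_secondMoment_mul hX hXA hQ v w
    _ = v ⬝ᵥ (secondMoment μ X)⁻¹ *ᵥ v := by rw [dotProduct_comm, dotProduct_mulVec]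

variable {η : Ω → ℝ} {θ : Ω → Fin d → ℝ} {θs θ0 : Fin d → ℝ}

theorem dotProduct_estimator_sub_eq [IsFiniteMeasure μ] (hX : Measurable X) (hXA : ∀ ω, X ω ∈ A)
    (hQ : IsUnit (secondMoment μ X).det)
    (hθ : ∀ ω i, θ ω i =
      θ0 i + ((secondMoment μ X)⁻¹ *ᵥ X ω) i * (X ω ⬝ᵥ θs + η ω - X ω ⬝ᵥ θ0))
    (v : Fin d → ℝ) (ω : Ω) :
    v ⬝ᵥ (θ ω - θs) =
      (v ᵥ* (secondMoment μ X)⁻¹ ⬝ᵥ X ω) * (X ω ⬝ᵥ (θs - θ0)) -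
        ∫ ω', (v ᵥ* (secondMoment μ X)⁻¹ ⬝ᵥ X ω') * (X ω' ⬝ᵥ (θs - θ0)) ∂μ +
        (v ᵥ* (secondMoment μ X)⁻¹ ⬝ᵥ X ω) * η ω := by
  rw [integral_vecMul_inv_secondMoment_mul hX hXA hQ]
  exact dotProduct_sub_eq_of_apply_eq_add_mulVec_mul _ (hθ ω) v

theorem memLp_dotProduct_estimator_sub [IsFiniteMeasure μ] (hX : Measurable X) (hXA : ∀ ω, X ω ∈ A)
    (hQ : IsUnit (secondMoment μ X).det) (hη : MemLp η 2 μ)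
    (hθ : ∀ ω i, θ ω i =
      θ0 i + ((secondMoment μ X)⁻¹ *ᵥ X ω) i * (X ω ⬝ᵥ θs + η ω - X ω ⬝ᵥ θ0))
    (v : Fin d → ℝ) : MemLp (fun ω => v ⬝ᵥ (θ ω - θs)) 2 μ := by
  set w := v ᵥ* (secondMoment μ X)⁻¹
  simp_rw [dotProduct_estimator_sub_eq hX hXA hQ hθ v]
  exact memLp_two_comp_sub_add_comp_mul hX hXA hη (fun x => (w ⬝ᵥ x) * (x ⬝ᵥ (θs - θ0)))
    (fun x => w ⬝ᵥ x) _

theorem integral_dotProduct_estimator_sub_eq_zero [IsProbabilityMeasure μ]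
    (hX : Measurable X) (hXA : ∀ ω, X ω ∈ A)
    (hQ : IsUnit (secondMoment μ X).det) (hη : Integrable η μ)
    (hη0 : μ[η | MeasurableSpace.comap X inferInstance] =ᵐ[μ] 0)
    (hθ : ∀ ω i, θ ω i =
      θ0 i + ((secondMoment μ X)⁻¹ *ᵥ X ω) i * (X ω ⬝ᵥ θs + η ω - X ω ⬝ᵥ θ0))
    (v : Fin d → ℝ) : ∫ ω, v ⬝ᵥ (θ ω - θs) ∂μ = 0 := by
  set w := v ᵥ* (secondMoment μ X)⁻¹
  simp_rw [dotProduct_estimator_sub_eq hX hXA hQ hθ v]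
  exact integral_comp_sub_integral_add_comp_mul_eq_zero hX hXA hη hη0
    (fun x => (w ⬝ᵥ x) * (x ⬝ᵥ (θs - θ0))) (fun x => w ⬝ᵥ x)

theorem integral_sq_dotProduct_estimator_sub_le [IsProbabilityMeasure μ] {σ R : ℝ}
    (hX : Measurable X) (hXA : ∀ ω, X ω ∈ A) (hQ : IsUnit (secondMoment μ X).det)
    (hη : MemLp η 2 μ)
    (hη0 : μ[η | MeasurableSpace.comap X inferInstance] =ᵐ[μ] 0)
    (hησ : ∀ᵐ ω ∂μ, μ[fun ω' => η ω' ^ 2 | MeasurableSpace.comap X inferInstance] ω ≤ σ ^ 2)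
    (hθ : ∀ ω i, θ ω i =
      θ0 i + ((secondMoment μ X)⁻¹ *ᵥ X ω) i * (X ω ⬝ᵥ θs + η ω - X ω ⬝ᵥ θ0))
    (hR : ∀ a ∈ A, |a ⬝ᵥ (θs - θ0)| ≤ R) (v : Fin d → ℝ) :
    ∫ ω, (v ⬝ᵥ (θ ω - θs)) ^ 2 ∂μ ≤ (R ^ 2 + σ ^ 2) * (v ⬝ᵥ (secondMoment μ X)⁻¹ *ᵥ v) := by
  set w := v ᵥ* (secondMoment μ X)⁻¹
  have hsignal : ∫ ω, ((w ⬝ᵥ X ω) * (X ω ⬝ᵥ (θs - θ0))) ^ 2 ∂μ ≤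
      R ^ 2 * ∫ ω, (w ⬝ᵥ X ω) ^ 2 ∂μ := by
    rw [← integral_const_mul]
    refine integral_mono (integrable_comp_of_forall_mem hX hXA
      fun x => ((w ⬝ᵥ x) * (x ⬝ᵥ (θs - θ0))) ^ 2)
      ((integrable_comp_of_forall_mem hX hXA fun x => (w ⬝ᵥ x) ^ 2).const_mul _) fun ω => ?_
    rw [mul_pow, mul_comm (R ^ 2)]
    exact mul_le_mul_of_nonneg_left (sq_le_sq.2 ((hR _ (hXA ω)).trans (le_abs_self R)))
      (sq_nonneg _)
  simp_rw [dotProduct_estimator_sub_eq hX hXA hQ hθ v]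
  calc _ ≤ ∫ ω, ((w ⬝ᵥ X ω) * (X ω ⬝ᵥ (θs - θ0))) ^ 2 ∂μ + σ ^ 2 * ∫ ω, (w ⬝ᵥ X ω) ^ 2 ∂μ :=
        integral_sq_comp_sub_integral_add_comp_mul_le hX hXA hη hη0 hησ
          (fun x => (w ⬝ᵥ x) * (x ⬝ᵥ (θs - θ0))) (fun x => w ⬝ᵥ x)
    _ ≤ R ^ 2 * ∫ ω, (w ⬝ᵥ X ω) ^ 2 ∂μ + σ ^ 2 * ∫ ω, (w ⬝ᵥ X ω) ^ 2 ∂μ := by gcongr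
    _ = (R ^ 2 + σ ^ 2) * (v ⬝ᵥ (secondMoment μ X)⁻¹ *ᵥ v) := by
        rw [integral_sq_vecMul_inv_secondMoment hX hXA hQ]
        ring

end LinearModel

theorem stmt13_general
    {Ω : Type*} [MeasureSpace Ω] [IsProbabilityMeasure (ℙ : Measure Ω)]
    (d : ℕ) (X : Ω → Fin d → ℝ) (η : Ω → ℝ)
    (hX : Measurable X)
    (A : Finset (Fin d → ℝ)) (hAne : A.Nonempty) (hXA : ∀ ω, X ω ∈ A)
    (θstar θ0 : Fin d → ℝ) (σ : ℝ)
    (Q : Matrix (Fin d) (Fin d) ℝ)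
    (hQ : ∀ i j, Q i j = ∫ ω, X ω i * X ω j)
    (hQinv : IsUnit Q.det)
    (hη2 : MemLp η 2 ℙ)
    (hcond0 : MeasureTheory.condExp (MeasurableSpace.comap X inferInstance) ℙ η =ᵐ[ℙ] 0)
    (hcondvar : ∀ᵐ ω ∂ℙ,
      MeasureTheory.condExp (MeasurableSpace.comap X inferInstance) ℙ (fun ω' => η ω' ^ 2) ω ≤ σ ^ 2)
    (y : Ω → ℝ) (hy : ∀ ω, y ω = X ω ⬝ᵥ θstar + η ω)
    (θt : Ω → Fin d → ℝ)
    (hθt : ∀ ω i, θt ω i = θ0 i + (Q⁻¹ *ᵥ X ω) i * (y ω - X ω ⬝ᵥ θ0))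
    (R0 : ℝ) (hR0 : R0 = A.sup' hAne fun a => |a ⬝ᵥ (θstar - θ0)|) :
    (∀ i, ∫ ω, θt ω i = θstar i) ∧
    Matrix.PosSemidef ((R0 ^ 2 + σ ^ 2) • Q⁻¹ -
      Matrix.of fun i j => ∫ ω, (θt ω i - θstar i) * (θt ω j - θstar j)) := by
  obtain rfl : Q = secondMoment ℙ X := Matrix.ext hQ
  have hθ : ∀ ω i, θt ω i = θ0 i + ((secondMoment ℙ X)⁻¹ *ᵥ X ω) i *
      (X ω ⬝ᵥ θstar + η ω - X ω ⬝ᵥ θ0) := fun ω i => hy ω ▸ hθt ω i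
  have hR : ∀ a ∈ A, |a ⬝ᵥ (θstar - θ0)| ≤ R0 := fun a ha =>
    hR0 ▸ Finset.le_sup' (fun a => |a ⬝ᵥ (θstar - θ0)|) ha
  have hL2 := memLp_dotProduct_estimator_sub hX hXA hQinv hη2 hθ
  have hmean := integral_dotProduct_estimator_sub_eq_zero hX hXA hQinv
    (hη2.integrable one_le_two) hcond0 hθ
  have hvar : ∀ v, ∫ ω, (v ⬝ᵥ (θt ω - θstar)) ^ 2 ≤
      v ⬝ᵥ ((R0 ^ 2 + σ ^ 2) • (secondMoment ℙ X)⁻¹) *ᵥ v := fun v => by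
    rw [smul_mulVec, dotProduct_smul, smul_eq_mul]
    exact integral_sq_dotProduct_estimator_sub_le hX hXA hQinv hη2 hcond0 hcondvar hθ hR v
  exact ⟨integral_apply_eq_of_integral_dotProduct_sub_eq_zero
      (fun v => (hL2 v).integrable one_le_two) hmean,
    posSemidef_sub_secondMoment ((isHermitian_secondMoment X).inv.smul (.all _)) hL2 hvar⟩

/-- The one-sample estimator `θ̃ = θ₀ + Q⁻¹ X (y − ⟨X, θ₀⟩)` is unbiased and its covariance
is dominated (in the Loewner order) by `(R₀² + σ²) Q⁻¹`. -/
theorem stmt13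
    {Ω : Type*} [MeasureSpace Ω] [IsProbabilityMeasure (ℙ : Measure Ω)]
    (d : ℕ) (X : Ω → Fin d → ℝ) (η : Ω → ℝ)
    (hX : Measurable X) (hη : Measurable η)
    (A : Finset (Fin d → ℝ)) (hAne : A.Nonempty) (hXA : ∀ ω, X ω ∈ A)
    (θstar θ0 : Fin d → ℝ) (σ : ℝ)
    (Q : Matrix (Fin d) (Fin d) ℝ)
    (hQ : ∀ i j, Q i j = ∫ ω, X ω i * X ω j)
    (hQinv : IsUnit Q.det)
    (hη2 : MemLp η 2 ℙ)
    (hcond0 : MeasureTheory.condExp (MeasurableSpace.comap X inferInstance) ℙ η =ᵐ[ℙ] 0)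
    (hcondvar : ∀ᵐ ω ∂ℙ,
      MeasureTheory.condExp (MeasurableSpace.comap X inferInstance) ℙ (fun ω' => η ω' ^ 2) ω ≤ σ ^ 2)
    (y : Ω → ℝ) (hy : ∀ ω, y ω = X ω ⬝ᵥ θstar + η ω)
    (θt : Ω → Fin d → ℝ)
    (hθt : ∀ ω i, θt ω i = θ0 i + (Q⁻¹ *ᵥ X ω) i * (y ω - X ω ⬝ᵥ θ0))
    (R0 : ℝ) (hR0 : R0 = A.sup' hAne fun a => |a ⬝ᵥ (θstar - θ0)|) :
    (∀ i, ∫ ω, θt ω i = θstar i) ∧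
    Matrix.PosSemidef ((R0 ^ 2 + σ ^ 2) • Q⁻¹ -
      Matrix.of fun i j => ∫ ω, (θt ω i - θstar i) * (θt ω j - θstar j)) :=
  stmt13_general d X η hX A hAne hXA θstar θ0 σ Q hQ hQinv hη2 hcond0 hcondvar y hy θt hθt R0 hR0
end
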